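/- In the ideal I of the CoHa of Ã₁ generated by {ψ_i^+ : i ≥ r} ∪ {ψ_j^- : j ≥ s}, the elements x^{i+r} y^s and x^{i+r+s} of H_{1⇄1} = Q[x,y] are congruent mod I for every i ≥ 0; consequently e_{1⇄1}^{r⇄s} ∪ φ_i = x^{i+r} y^s ≡ φ_{i+r+s} (mod I). -/

import Mathlib

open MvPolynomial

attribute [local instance] Classical.propDecidable

/-- Component `H_{m⇄n}` of the CoHa of `Ã₁` (as subspace of rational
functions): the fraction field of `ℚ[x_1,…,x_m,y_1,…,y_n]`. -/
noncomputable abbrev FF2 (m n : ℕ) : Type :=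
  FractionRing (MvPolynomial (Fin m ⊕ Fin n) ℚ)

/-- Extension of variable renaming along an injection to fraction fields. -/
noncomputable def embF {σ τ : Type} (v : σ → τ) (hv : Function.Injective v) :
    FractionRing (MvPolynomial σ ℚ) →+* FractionRing (MvPolynomial τ ℚ) :=
  IsFractionRing.lift (g := (algebraMap (MvPolynomial τ ℚ)
      (FractionRing (MvPolynomial τ ℚ))).comp (rename v).toRingHom)
    ((IsFractionRing.injective (MvPolynomial τ ℚ)
        (FractionRing (MvPolynomial τ ℚ))).comp (rename_injective v hv))

/-- `(d,e)`-shuffles. -/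
def IsShuffle {d e : ℕ} (σ : Equiv.Perm (Fin (d + e))) : Prop :=
  StrictMono (fun i : Fin d => σ (Fin.castAdd e i)) ∧
    StrictMono (fun j : Fin e => σ (Fin.natAdd d j))

/-- The CoHa product of `Ã₁`: for `f ∈ H_{m⇄n}` and `g ∈ H_{r⇄s}`,
`f * g = Σ_{σ,τ} f(x_{σ…},y_{τ…}) g(x_{σ…},y_{τ…}) Δ₁/Δ₀`, the sum over
`(m,r)`-shuffles `σ` and `(n,s)`-shuffles `τ`, where
`Δ₁ = Π_{i≤m, j'>n}(y_{j'} − x_i) Π_{i'>m, j≤n}(x_{i'} − y_j)` and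
`Δ₀ = Π_{i≤m<i'}(x_{i'} − x_i) Π_{j≤n<j'}(y_{j'} − y_j)`. -/
noncomputable def mulA1 {m n r s : ℕ} (f : FF2 m n) (g : FF2 r s) :
    FF2 (m + r) (n + s) :=
  ∑ σ ∈ Finset.univ.filter (fun σ : Equiv.Perm (Fin (m + r)) => IsShuffle σ),
    ∑ τ ∈ Finset.univ.filter (fun τ : Equiv.Perm (Fin (n + s)) => IsShuffle τ),
      embF (Sum.map (fun i : Fin m => σ (Fin.castAdd r i))
          (fun j : Fin n => τ (Fin.castAdd s j)))
        ((σ.injective.comp (Fin.castAdd_injective m r)).sumMap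
          (τ.injective.comp (Fin.castAdd_injective n s))) f *
      embF (Sum.map (fun i : Fin r => σ (Fin.natAdd m i))
          (fun j : Fin s => τ (Fin.natAdd n j)))
        ((σ.injective.comp (Fin.natAddEmb m).injective).sumMap
          (τ.injective.comp (Fin.natAddEmb n).injective)) g *
      algebraMap (MvPolynomial (Fin (m + r) ⊕ Fin (n + s)) ℚ) (FF2 (m + r) (n + s))
        ((∏ i : Fin m, ∏ j' : Fin s,
            (X (Sum.inr (τ (Fin.natAdd n j'))) - X (Sum.inl (σ (Fin.castAdd r i))))) *
          (∏ i' : Fin r, ∏ j : Fin n,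
            (X (Sum.inl (σ (Fin.natAdd m i'))) - X (Sum.inr (τ (Fin.castAdd s j)))))) *
      (algebraMap (MvPolynomial (Fin (m + r) ⊕ Fin (n + s)) ℚ) (FF2 (m + r) (n + s))
        ((∏ i : Fin m, ∏ i' : Fin r,
            (X (Sum.inl (σ (Fin.natAdd m i'))) - X (Sum.inl (σ (Fin.castAdd r i))))) *
          (∏ j : Fin n, ∏ j' : Fin s,
            (X (Sum.inr (τ (Fin.natAdd n j'))) - X (Sum.inr (τ (Fin.castAdd s j)))))))⁻¹

/-- `ψ_k⁺ = x^k ∈ H_{1⇄0}`. -/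
noncomputable def psiPlus (k : ℕ) : FF2 1 0 :=
  algebraMap (MvPolynomial (Fin 1 ⊕ Fin 0) ℚ) (FF2 1 0) (X (Sum.inl 0) ^ k)

/-- `ψ_l⁻ = y^l ∈ H_{0⇄1}`. -/
noncomputable def psiMinus (l : ℕ) : FF2 0 1 :=
  algebraMap (MvPolynomial (Fin 0 ⊕ Fin 1) ℚ) (FF2 0 1) (X (Sum.inr 0) ^ l)

/-- The `(1⇄1)`-component of the ideal `I` of the CoHa of `Ã₁` generated by
`{ψ_i⁺ : i ≥ r} ∪ {ψ_j⁻ : j ≥ s}`: it is spanned by the products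
`ψ_k⁺ * ψ_l⁻` with `k ≥ r` or `l ≥ s`. -/
noncomputable def idealComp11 (r s : ℕ) : Submodule ℚ (FF2 1 1) :=
  Submodule.span ℚ {z : FF2 1 1 | ∃ k l : ℕ, (r ≤ k ∨ s ≤ l) ∧
    mulA1 (psiPlus k) (psiMinus l) = z}

/-!
The product `ψ_k⁺ * ψ_l⁻ = x^k y^{l+1} - x^{k+1} y^l` lies in `I` as soon as `k ≥ r`, so modulo `I`
a factor `y` may be traded for a factor `x` in any monomial whose `x`-degree is at least `r`.
Doing this `t` times gives `x^a y^t ≡ x^{a+t}` for every `a ≥ r`.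
-/

local notation "x" => (X (Sum.inl 0) : MvPolynomial (Fin 1 ⊕ Fin 1) ℚ)
local notation "y" => (X (Sum.inr 0) : MvPolynomial (Fin 1 ⊕ Fin 1) ℚ)

lemma embF_algebraMap {σ τ : Type} (v : σ → τ) (hv : Function.Injective v)
    (p : MvPolynomial σ ℚ) :
    embF v hv (algebraMap (MvPolynomial σ ℚ) (FractionRing (MvPolynomial σ ℚ)) p) =
      algebraMap (MvPolynomial τ ℚ) (FractionRing (MvPolynomial τ ℚ)) (rename v p) := by
  simp [embF]

lemma filter_isShuffle_eq_singleton_one {d e : ℕ} (h : d + e ≤ 1) :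
    Finset.univ.filter (fun σ : Equiv.Perm (Fin (d + e)) => IsShuffle σ) = {1} := by
  have : Subsingleton (Fin (d + e)) := Fin.subsingleton_iff_le_one.mpr h
  have : Subsingleton (Fin d) := (Fin.castAdd_injective d e).subsingleton
  have : Subsingleton (Fin e) := (Fin.natAddEmb d).injective.subsingleton
  ext σ
  simp [Subsingleton.elim σ 1, IsShuffle, Subsingleton.strictMono]

lemma mulA1_psiPlus_psiMinus (k l : ℕ) :
    mulA1 (psiPlus k) (psiMinus l) =
      algebraMap (MvPolynomial (Fin 1 ⊕ Fin 1) ℚ) (FF2 1 1)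
        (x ^ k * y ^ (l + 1) - x ^ (k + 1) * y ^ l) := by
  rw [mulA1, filter_isShuffle_eq_singleton_one le_rfl, filter_isShuffle_eq_singleton_one le_rfl,
    Finset.sum_singleton, Finset.sum_singleton]
  simp only [psiPlus, psiMinus, embF_algebraMap, map_pow, rename_X, Sum.map_inl, Sum.map_inr,
    Equiv.Perm.one_apply, Fin.castAdd_zero, Fin.natAdd_zero, Fin.cast_eq_self, Fin.prod_univ_one,
    Fin.prod_univ_zero, Finset.prod_const_one, mul_one, map_one, inv_one]
  rw [← map_pow, ← map_pow, ← map_mul, ← map_mul]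
  congr 1
  ring

lemma mulA1_psiPlus_psiMinus_mem_idealComp11 {r k : ℕ} (s l : ℕ) (hk : r ≤ k) :
    mulA1 (psiPlus k) (psiMinus l) ∈ idealComp11 r s :=
  Submodule.subset_span ⟨k, l, Or.inl hk, rfl⟩

lemma algebraMap_pow_mul_pow_sub_pow_mem_idealComp11 {r a : ℕ} (s t : ℕ) (ha : r ≤ a) :
    algebraMap (MvPolynomial (Fin 1 ⊕ Fin 1) ℚ) (FF2 1 1)
        (x ^ a * y ^ t - x ^ (a + t)) ∈ idealComp11 r s := by
  induction t generalizing a with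
  | zero => simp
  | succ t ih =>
    have hsplit : x ^ a * y ^ (t + 1) - x ^ (a + (t + 1)) =
        (x ^ a * y ^ (t + 1) - x ^ (a + 1) * y ^ t) + (x ^ (a + 1) * y ^ t - x ^ (a + 1 + t)) := by
      ring
    rw [hsplit, map_add, ← mulA1_psiPlus_psiMinus]
    exact add_mem (mulA1_psiPlus_psiMinus_mem_idealComp11 s t ha) (ih (ha.trans a.le_succ))

/-- in the CoHa of `Ã₁`, modulo the ideal `I` generated by the
`ψ_i⁺` (`i ≥ r`) and `ψ_j⁻` (`j ≥ s`), the elements `x^{i+r} y^s` and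
`x^{i+r+s}` of `H_{1⇄1} = ℚ[x,y]` are congruent for every `i ≥ 0`;
consequently, since `e_{1⇄1}^{r⇄s} ∪ φ_i = x^r y^s · x^i = x^{i+r} y^s`,
one has `e_{1⇄1}^{r⇄s} ∪ φ_i ≡ φ_{i+r+s} (mod I)`. -/
theorem A1_ideal_congruence (r s : ℕ) (i : ℕ) :
    (X (Sum.inl 0) ^ r * X (Sum.inr 0) ^ s * X (Sum.inl 0) ^ i
        : MvPolynomial (Fin 1 ⊕ Fin 1) ℚ) =
      X (Sum.inl 0) ^ (i + r) * X (Sum.inr 0) ^ s ∧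
    algebraMap (MvPolynomial (Fin 1 ⊕ Fin 1) ℚ) (FF2 1 1)
        (X (Sum.inl 0) ^ (i + r) * X (Sum.inr 0) ^ s -
          X (Sum.inl 0) ^ (i + r + s)) ∈ idealComp11 r s :=
  ⟨by ring, algebraMap_pow_mul_pow_sub_pow_mem_idealComp11 s s (Nat.le_add_left r i)⟩
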